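/- Let X be a compact topological space, V a finite-dimensional real normed space, d ∈ ℕ, and let f : X × V → ℝ be continuous such that f(x, F) = Σ_{i=0}^d a_i(x, F) where each a_i(x, ·) is a positively i-homogeneous continuous function of F. Then each component a_i : X × V → ℝ is jointly continuous. -/

import Mathlib

/-!
Write `σ` for the rescaling `(x, F) ↦ (x, 2 F)`, so that homogeneity reads `a_i ∘ σ = 2^i a_i`.
Then `2^d f - f ∘ σ = ∑_{i<d} (2^d - 2^i) a_i` is continuous and has one component fewer, with
nonzero coefficients; by induction `a_0, …, a_{d-1}` are continuous, and so is
`a_d = f - ∑_{i<d} a_i`.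
-/

open Finset

theorem pow_mul_sum_range_sub_sum_range_comp {P R : Type*} [CommRing R] {σ : P → P} {c : R}
    (n : ℕ) (a : ℕ → P → R)
    (hscale : ∀ i ≤ n, ∀ p, a i (σ p) = c ^ i * a i p) (p : P) :
    c ^ n * ∑ i ∈ range (n + 1), a i p - ∑ i ∈ range (n + 1), a i (σ p) =
      ∑ i ∈ range n, (c ^ n - c ^ i) * a i p := by
  have hterm : ∀ i ∈ range (n + 1), c ^ n * a i p - a i (σ p) = (c ^ n - c ^ i) * a i p :=
    fun i hi => by rw [hscale i (Nat.lt_succ_iff.mp (mem_range.mp hi))]; ring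
  rw [mul_sum, ← sum_sub_distrib, sum_congr rfl hterm, sum_range_succ, sub_self, zero_mul,
    add_zero]

theorem continuous_of_continuous_sum_of_comp_eq_pow_mul {P 𝕜 : Type*} [TopologicalSpace P]
    [Field 𝕜] [TopologicalSpace 𝕜] [IsTopologicalRing 𝕜] {σ : P → P} (hσ : Continuous σ) {c : 𝕜}
    (hc : Function.Injective (c ^ · : ℕ → 𝕜)) (d : ℕ) (a : ℕ → P → 𝕜)
    (hscale : ∀ i ≤ d, ∀ p, a i (σ p) = c ^ i * a i p)
    (hsum : Continuous fun p => ∑ i ∈ range (d + 1), a i p) :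
    ∀ i ≤ d, Continuous (a i) := by
  induction d generalizing a with
  | zero =>
    intro i hi
    obtain rfl := Nat.le_zero.mp hi
    simpa using hsum
  | succ d ih =>
    have hcoeff : ∀ i ≤ d, c ^ (d + 1) - c ^ i ≠ 0 := fun i hi h => by
      have := @hc (d + 1) i (sub_eq_zero.mp h)
      omega
    have hlower : ∀ i ≤ d, Continuous (a i) := by
      have hb := ih (fun i p => (c ^ (d + 1) - c ^ i) * a i p)
        (fun i hi p => by rw [hscale i (hi.trans d.le_succ)]; ring)
        (by
          simp_rw [← pow_mul_sum_range_sub_sum_range_comp (d + 1) a hscale]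
          exact (continuous_const.mul hsum).sub (hsum.comp hσ))
      intro i hi
      have hai : a i = fun p => (c ^ (d + 1) - c ^ i)⁻¹ * ((c ^ (d + 1) - c ^ i) * a i p) := by
        funext p; rw [inv_mul_cancel_left₀ (hcoeff i hi)]
      rw [hai]
      exact continuous_const.mul (hb i hi)
    intro i hi
    rcases hi.lt_or_eq with hi | rfl
    · exact hlower i (Nat.lt_succ_iff.mp hi)
    · have htop : a (d + 1) = fun p =>
          ∑ i ∈ range (d + 2), a i p - ∑ i ∈ range (d + 1), a i p := by
        funext p; rw [sum_range_succ _ (d + 1), add_sub_cancel_left]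
      rw [htop]
      exact hsum.sub (continuous_finsetSum _ fun j hj => hlower j (mem_range_succ_iff.mp hj))

theorem stmt10_general (X V : Type*) [TopologicalSpace X]
    [NormedAddCommGroup V] [NormedSpace ℝ V]
    (d : ℕ) (f : X → V → ℝ)
    (hf : Continuous fun p : X × V => f p.1 p.2)
    (a : ℕ → X → V → ℝ)
    (hdec : ∀ x F, f x F = ∑ i ∈ Finset.range (d + 1), a i x F)
    (hhom : ∀ i ≤ d, ∀ x, ∀ t : ℝ, 0 ≤ t → ∀ F, a i x (t • F) = t ^ i * a i x F) :
    ∀ i ≤ d, Continuous fun p : X × V => a i p.1 p.2 := by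
  have hσ : Continuous fun p : X × V => (p.1, (2 : ℝ) • p.2) :=
    continuous_fst.prodMk (continuous_snd.const_smul _)
  exact continuous_of_continuous_sum_of_comp_eq_pow_mul hσ
    (pow_right_injective₀ two_pos (by norm_num)) d (fun i p => a i p.1 p.2)
    (fun i hi p => hhom i hi p.1 2 zero_le_two p.2) (by simpa only [hdec] using hf)

/-- If a continuous `f : X × V → ℝ` (with `X` compact) decomposes into
positively `i`-homogeneous components `a_i`, each continuous in `F`, then every
component `a_i` is jointly continuous. -/
theorem stmt10 (X V : Type*) [TopologicalSpace X] [CompactSpace X]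
    [NormedAddCommGroup V] [NormedSpace ℝ V] [FiniteDimensional ℝ V]
    (d : ℕ) (f : X → V → ℝ)
    (hf : Continuous fun p : X × V => f p.1 p.2)
    (a : ℕ → X → V → ℝ)
    (hdec : ∀ x F, f x F = ∑ i ∈ Finset.range (d + 1), a i x F)
    (hhom : ∀ i ≤ d, ∀ x, ∀ t : ℝ, 0 ≤ t → ∀ F, a i x (t • F) = t ^ i * a i x F)
    (hcont : ∀ i ≤ d, ∀ x, Continuous (a i x)) :
    ∀ i ≤ d, Continuous fun p : X × V => a i p.1 p.2 :=
  stmt10_general X V d f hf a hdec hhom
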